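/- Let d ≥ 5. There are numbers r = r(n,d) and c = c(d) > 0 such that if A, B ⊂ Z^d are disjoint, A ∪ B has exactly n elements, dist(A, B) ≥ r, and x is the lex element of A, then esc_{A∪B}(x) ≥ c·n^{−1/(d−2) − 0.8} and H_{A∪B}(x) ≥ c·n^{−2.2}. -/

import Mathlib

open MeasureTheory

namespace HATFormal

/-- Points of the lattice `ℤ^d`. -/
abbrev Pt (d : ℕ) := Fin d → ℤ

/-- The `2d` unit steps of the simple random walk on `ℤ^d`. -/
def Dir (d : ℕ) : Set (Pt d) :=
  {s | ∃ i : Fin d, s = Pi.single i 1 ∨ s = Pi.single i (-1)}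

/-- The position, after `t` steps, of the walk started at `x` with steps `s`. -/
def wpos (d : ℕ) (x : Pt d) {T : ℕ} (s : Fin T → Pt d) (t : ℕ) : Pt d :=
  x + ∑ i ∈ Finset.univ.filter (fun i : Fin T => (i : ℕ) < t), s i

/-- The probability of an event `P` of the first `T` steps of simple random walk on `ℤ^d`. -/
noncomputable def prob (d T : ℕ) (P : (Fin T → Pt d) → Prop) : ℝ :=
  (Nat.card {s : Fin T → Pt d // (∀ i, s i ∈ Dir d) ∧ P s} : ℝ) / ((2 * d : ℕ) : ℝ) ^ T

open Classical in
/-- `esc d A x = P_x(τ_A = ∞)` if `x ∈ A`, and `0` otherwise. -/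
noncomputable def esc (d : ℕ) (A : Set (Pt d)) (x : Pt d) : ℝ :=
  if x ∈ A then ⨅ T : ℕ, prob d T (fun s => ∀ t, 1 ≤ t → t ≤ T → wpos d x s t ∉ A) else 0

/-- The capacity of `A`. -/
noncomputable def capa (d : ℕ) (A : Set (Pt d)) : ℝ := ∑' x : A, esc d A (x : Pt d)

/-- The harmonic measure `H_A(x) = esc_A(x) / cap_A`. -/
noncomputable def harm (d : ℕ) (A : Set (Pt d)) (x : Pt d) : ℝ := esc d A x / capa d A

/-- `P_x(τ_W < ∞)`. -/
noncomputable def retProb (d : ℕ) (W : Set (Pt d)) (x : Pt d) : ℝ :=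
  ∑' t : ℕ, prob d t (fun s => 1 ≤ t ∧ wpos d x s t ∈ W ∧
    ∀ u, 1 ≤ u → u < t → wpos d x s u ∉ W)

/-- `P_x(τ_W < ∞ and S_{τ_W − 1} = y)`. -/
noncomputable def hitFrom (d : ℕ) (W : Set (Pt d)) (x y : Pt d) : ℝ :=
  ∑' t : ℕ, prob d t (fun s => 1 ≤ t ∧ wpos d x s t ∈ W ∧ wpos d x s (t - 1) = y ∧
    ∀ u, 1 ≤ u → u < t → wpos d x s u ∉ W)

/-- `P_x(τ_W < ∞ and S_{τ_W} ∈ T)`. -/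
noncomputable def firstHitIn (d : ℕ) (W T : Set (Pt d)) (x : Pt d) : ℝ :=
  ∑' t : ℕ, prob d t (fun s => 1 ≤ t ∧ wpos d x s t ∈ W ∧ wpos d x s t ∈ T ∧
    ∀ u, 1 ≤ u → u < t → wpos d x s u ∉ W)

/-- `P_x(S_{τ_W − 1} = y ∣ τ_W < ∞)`. -/
noncomputable def transP (d : ℕ) (W : Set (Pt d)) (x y : Pt d) : ℝ :=
  hitFrom d W x y / retProb d W x

/-- The Green's function of simple random walk on `ℤ^d`. -/
noncomputable def green (d : ℕ) (x : Pt d) : ℝ :=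
  ∑' t : ℕ, prob d t (fun s => wpos d x s t = 0)

/-- Configurations: finite subsets of `ℤ^d`. -/
abbrev Conf (d : ℕ) := Finset (Pt d)

/-- `p_U(x, y)`, the probability that HAT activates at `x` and transports to `y`. -/
noncomputable def pHAT (d : ℕ) (U : Conf d) (x y : Pt d) : ℝ :=
  harm d (↑U) x * transP d ((↑U : Set (Pt d)) \ {x}) x y

open Classical in
/-- The transition probabilities of HAT. -/
noncomputable def hatProb (d : ℕ) (U V : Conf d) : ℝ :=
  if V = U then ∑' z : Pt d, pHAT d U z z
  else ∑' x : Pt d, ∑' y : Pt d,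
    if x ∈ U ∧ x ≠ y ∧ V = insert y (U.erase x) then pHAT d U x y else 0

instance (d : ℕ) : MeasurableSpace (Conf d) := ⊤

/-- `μ` is the law of HAT started from `U`. -/
def IsHATLaw (d : ℕ) (U : Conf d) (μ : Measure (ℕ → Conf d)) : Prop :=
  IsProbabilityMeasure μ ∧
  ∀ (t : ℕ) (u : ℕ → Conf d),
    μ {ω | ∀ s ≤ t, ω s = u s} =
      (if u 0 = U then 1 else 0) *
        ∏ s ∈ Finset.range t, ENNReal.ofReal (hatProb d (u s) (u (s + 1)))

/-- A signed permutation plus translation of `ℤ^d`. -/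
def SymImage (d : ℕ) (σ : Equiv.Perm (Fin d)) (ε : Fin d → ℤ) (v : Pt d) (x : Pt d) : Pt d :=
  fun i => v i + ε i * x (σ i)

/-- `SymEq d U V` holds when `V = gU` for a symmetry `g` of `ℤ^d`. -/
def SymEq (d : ℕ) (U V : Conf d) : Prop :=
  ∃ (σ : Equiv.Perm (Fin d)) (ε : Fin d → ℤ) (v : Pt d),
    (∀ i, ε i = 1 ∨ ε i = -1) ∧ V = U.image (SymImage d σ ε v)

/-- Euclidean distance on `ℤ^d`. -/
noncomputable def dist0 (d : ℕ) (x y : Pt d) : ℝ :=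
  Real.sqrt (∑ i, ((x i : ℝ) - (y i : ℝ)) ^ 2)

/-- Euclidean distance between finite subsets of `ℤ^d`. -/
noncomputable def setDist (d : ℕ) (A B : Finset (Pt d)) : ℝ :=
  sInf {r : ℝ | ∃ x ∈ A, ∃ y ∈ B, r = dist0 d x y}

/-- Euclidean diameter of a finite subset of `ℤ^d`. -/
noncomputable def diam0 (d : ℕ) (A : Finset (Pt d)) : ℝ :=
  sSup {r : ℝ | ∃ x ∈ A, ∃ y ∈ A, r = dist0 d x y}

/-- Lattice (nearest-neighbor) adjacency in `ℤ^d`. -/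
def latAdj (d : ℕ) (x y : Pt d) : Prop := (∑ i, (x i - y i).natAbs) = 1

/-- Exterior lattice boundary of a set. -/
def bdry (d : ℕ) (A : Set (Pt d)) : Set (Pt d) := {z | z ∉ A ∧ ∃ w ∈ A, latAdj d z w}

/-- Non-isolated configurations: some exposed element has a lattice neighbor in the set. -/
def NonIso (d : ℕ) (U : Conf d) : Prop :=
  ∃ x ∈ U, 0 < esc d (↑U) x ∧ ∃ y ∈ U, latAdj d x y

/-- `C` is a clustering (ordered partition into nonempty clusters) of `U`. -/
def IsClusteringOf (d : ℕ) {k : ℕ} (C : Fin k → Finset (Pt d)) (U : Finset (Pt d)) : Prop :=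
  (∀ i, (C i).Nonempty) ∧ (∀ i j, i ≠ j → Disjoint (C i) (C j)) ∧
    Finset.univ.biUnion C = U

/-- `C^{≠ i}`, the union of the clusters other than `i`. -/
def others (d : ℕ) {k : ℕ} (C : Fin k → Finset (Pt d)) (i : Fin k) : Finset (Pt d) :=
  Finset.univ.biUnion fun j => if j = i then ∅ else C j

/-- The separation of a clustering. -/
noncomputable def sep (d : ℕ) {k : ℕ} (C : Fin k → Finset (Pt d)) : ℝ :=
  ⨅ i, setDist d (C i) (others d C i)

/-- `(a, b)` separated dimer-or-trimer (DOT) clusterings. -/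
def IsDOT (d : ℕ) {k : ℕ} (C : Fin k → Finset (Pt d)) (a b : ℝ) : Prop :=
  (∀ i, (C i).card = 2 ∨ (C i).card = 3) ∧ a ≤ sep d C ∧
    ∀ i, diam0 d (C i) ≤ b * Real.log (setDist d (C i) (others d C i))

/-- Clusterings with an unspecified number of clusters. -/
abbrev ClusteringS (d : ℕ) := Σ k : ℕ, Fin k → Finset (Pt d)

/-- `π(C)`, the union of the clusters of `C`. -/
def confOf (d : ℕ) (C : ClusteringS d) : Conf d := Finset.univ.biUnion C.2

/-- `C ∈ 𝒞(U, a, b)`. -/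
def InC (d : ℕ) (U : Conf d) (a b : ℝ) (C : ClusteringS d) : Prop :=
  IsClusteringOf d C.2 U ∧ IsDOT d C.2 a b

/-- `U ∈ 𝒰_{d,n}(a, b)`. -/
def InU (d n : ℕ) (a b : ℝ) (U : Conf d) : Prop :=
  U.card = n ∧ ∃ C : ClusteringS d, InC d U a b C

/-- `C` is a clustering of an `n`-element configuration. -/
def IsClusteringConf (d n : ℕ) (C : ClusteringS d) : Prop :=
  (∀ i, (C.2 i).Nonempty) ∧ (∀ i j, i ≠ j → Disjoint (C.2 i) (C.2 j)) ∧
    (confOf d C).card = n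

open Classical in
/-- One step of the natural clustering. -/
noncomputable def clustStep (d : ℕ) (Ut Ut1 : Conf d) (C : ClusteringS d) : ClusteringS d :=
  if Ut1 = Ut then C
  else if h : ∃ p : Pt d × Pt d × Fin C.1,
      Ut \ Ut1 = {p.1} ∧ Ut1 \ Ut = {p.2.1} ∧ p.1 ∈ C.2 p.2.2 then
    ⟨C.1, Function.update C.2 h.choose.2.2
      (insert h.choose.2.1 ((C.2 h.choose.2.2).erase h.choose.1))⟩
  else ⟨1, fun _ => Ut1⟩

/-- The natural clustering of the trajectory `ω` with initial clustering `C0`. -/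
noncomputable def natClust (d : ℕ) (ω : ℕ → Conf d) (C0 : ClusteringS d) : ℕ → ClusteringS d
  | 0 => C0
  | t + 1 => clustStep d (ω t) (ω (t + 1)) (natClust d ω C0 t)

/-- `a_s = s^{1/2 − n^{−100}} + 100 n`. -/
noncomputable def aSep (n s : ℕ) : ℝ :=
  (s : ℝ) ^ ((1 : ℝ) / 2 - (n : ℝ) ^ (-(100 : ℝ))) + 100 * n

/-- `C^{i, x, y}`: remove `x` from cluster `i` of `C` and add `y` to that cluster. -/
def updC (d : ℕ) (C : ClusteringS d) (i : Fin C.1) (x y : Pt d) : ClusteringS d :=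
  ⟨C.1, Function.update C.2 i (insert y ((C.2 i).erase x))⟩

open Classical in
/-- The transition probabilities of the lifting of HAT to clusterings. -/
noncomputable def liftProb (d : ℕ) (E0 E1 : ClusteringS d) : ℝ :=
  ∑' x : Pt d, ∑' y : Pt d,
    if ∃ i : Fin E0.1, x ∈ E0.2 i ∧ E1 = updC d E0 i x y
    then pHAT d (confOf d E0) x y else 0

/-- The capacity of a clustering: the sum of the capacities of its clusters. -/
noncomputable def capS (d : ℕ) (C : ClusteringS d) : ℝ := ∑ i, capa d (↑(C.2 i))

/-- `H_C(i, x) = esc_{C^i}(x) / cap_C`. -/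
noncomputable def harmS (d : ℕ) (C : ClusteringS d) (i : Fin C.1) (x : Pt d) : ℝ :=
  esc d (↑(C.2 i)) x / capS d C

/-- `q_C(i, x, y)`. -/
noncomputable def qIHAT (d : ℕ) (C : ClusteringS d) (i : Fin C.1) (x y : Pt d) : ℝ :=
  harmS d C i x * transP d ((↑(C.2 i) : Set (Pt d)) \ {x}) x y

open Classical in
/-- The transition probabilities of intracluster HAT (IHAT). -/
noncomputable def ihatProb (d : ℕ) (D E : ClusteringS d) : ℝ :=
  ∑' x : Pt d, ∑' y : Pt d, ∑ i : Fin D.1,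
    if x ∈ D.2 i ∧ E = updC d D i x y then qIHAT d D i x y else 0

instance (d : ℕ) : MeasurableSpace (ClusteringS d) := ⊤

open Classical in
/-- `μ` is the law of the lifted HAT chain started from `E0`. -/
def IsLiftLaw (d : ℕ) (E0 : ClusteringS d) (μ : Measure (ℕ → ClusteringS d)) : Prop :=
  IsProbabilityMeasure μ ∧
  ∀ (t : ℕ) (u : ℕ → ClusteringS d),
    μ {ω | ∀ s ≤ t, ω s = u s} =
      (if u 0 = E0 then 1 else 0) *
        ∏ s ∈ Finset.range t, ENNReal.ofReal (liftProb d (u s) (u (s + 1)))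

open Classical in
/-- `μ` is the law of intracluster HAT started from `D0`. -/
def IsIHATLaw (d : ℕ) (D0 : ClusteringS d) (μ : Measure (ℕ → ClusteringS d)) : Prop :=
  IsProbabilityMeasure μ ∧
  ∀ (t : ℕ) (u : ℕ → ClusteringS d),
    μ {ω | ∀ s ≤ t, ω s = u s} =
      (if u 0 = D0 then 1 else 0) *
        ∏ s ∈ Finset.range t, ENNReal.ofReal (ihatProb d (u s) (u (s + 1)))

/-- `Pairs(E0, E1)`. -/
def Pairs (d : ℕ) (E0 E1 : ClusteringS d) : Set (Pt d × Pt d) :=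
  {p | 0 < pHAT d (confOf d E0) p.1 p.2 ∧
    ∃ i : Fin E0.1, p.1 ∈ E0.2 i ∧ E1 = updC d E0 i p.1 p.2}

/-- `Triples(E0, E1)`. -/
def Triples (d : ℕ) (E0 E1 : ClusteringS d) : Set (Fin E0.1 × Pt d × Pt d) :=
  {q | 0 < qIHAT d E0 q.1 q.2.1 q.2.2 ∧ E1 = updC d E0 q.1 q.2.1 q.2.2}

/-- The first standard basis vector of `ℤ^d`. -/
def e1v (d : ℕ) : Pt d := fun i => if (i : ℕ) = 0 then 1 else 0

/-- Reference dimers and trimers. -/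
def Ref (d : ℕ) : Set (Finset (Pt d)) :=
  {A | ∃ x : Pt d, A = {x, x + e1v d} ∨ A = {x, x + e1v d, x + e1v d + e1v d}}

/-- *-adjacency in `ℤ^d`: distinct points differing by at most one in each coordinate. -/
def starAdj (d : ℕ) (x y : Pt d) : Prop := x ≠ y ∧ ∀ i, (x i - y i).natAbs ≤ 1

/-- The *-visible boundary of `A`. -/
def visBdry (d : ℕ) (A : Finset (Pt d)) : Set (Pt d) :=
  {x | (∃ y ∈ A, starAdj d x y) ∧
    ∃ γ : ℕ → Pt d, γ 0 = x ∧ (∀ t, latAdj d (γ t) (γ (t + 1))) ∧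
      (∀ t, γ t ∉ A) ∧ ∀ r : ℝ, ∃ t, r < dist0 d (γ t) 0}

/-- `A` is connected in the nearest-neighbor graph of `ℤ^d`. -/
def LatConnected (d : ℕ) (A : Finset (Pt d)) : Prop :=
  ∀ x ∈ A, ∀ y ∈ A, ∃ (L : ℕ) (γ : ℕ → Pt d), γ 0 = x ∧ γ L = y ∧
    (∀ t < L, latAdj d (γ t) (γ (t + 1))) ∧ ∀ t ≤ L, γ t ∈ A

/-- Strict lexicographic order on `ℤ^d`. -/
def lexLt (d : ℕ) (x y : Pt d) : Prop :=
  ∃ i : Fin d, (∀ j, j < i → x j = y j) ∧ x i < y i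

/-- `x` is the lex (least) element of `A`. -/
def IsLex (d : ℕ) (A : Finset (Pt d)) (x : Pt d) : Prop :=
  x ∈ A ∧ ∀ y ∈ A, y ≠ x → lexLt d x y


/-!
Let `e` be the first unit vector. Since `x` is lex-least in `A`, all of `A` lies in the
half-space `{z | x 0 ≤ z 0}`, and the walk from `x` steps to `x - e`, at depth `1` below it,
with probability `1 / (2d)`. The depth is harmonic, so a walk started at depth `1` reaches
depth `K` before depth `0` with probability `1 / K` (gambler's ruin). From depth `K` it is at
distance at least `K` from `A`, and since `min 1 (36 / |v|²)` is superharmonic off the origin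
for `d ≥ 5`, it dominates the probability of ever hitting a given point; a union bound over
the `n` points then shows that the walk escapes from there with probability at least
`1 - 36 n / K²`. The far cluster `B` is handled by the same majorant, at a cost `O(1 / K)`.
With `K ≍ n ^ 0.8` this gives `esc(x) ≳ n ^ (-0.8)`, and `H(x) ≥ esc(x) / n` because `cap ≤ n`.
-/

section Steps
variable {d : ℕ}

def stepFinset (d : ℕ) : Finset (Pt d) :=
  Finset.univ.image fun p : Fin d × Bool => Pi.single p.1 (if p.2 then (1 : ℤ) else -1)

lemma stepFinset_injective : Function.Injective
    (fun p : Fin d × Bool => (Pi.single p.1 (if p.2 then (1 : ℤ) else -1) : Pt d)) := by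
  rintro ⟨i, b⟩ ⟨j, c⟩ h
  have hi := congrFun h i
  simp only [Pi.single_apply] at hi
  obtain rfl : i = j := by
    by_contra hne
    rw [if_neg hne] at hi
    cases b <;> simp_all
  cases b <;> cases c <;> simp_all

lemma mem_stepFinset {v : Pt d} : v ∈ stepFinset d ↔ v ∈ Dir d := by
  simp only [stepFinset, Finset.mem_image, Finset.mem_univ, true_and, Dir, Set.mem_ofPred_eq]
  constructor
  · rintro ⟨⟨i, b⟩, rfl⟩
    exact ⟨i, by cases b <;> simp⟩
  · rintro ⟨i, rfl | rfl⟩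
    · exact ⟨⟨i, true⟩, by simp⟩
    · exact ⟨⟨i, false⟩, by simp⟩

lemma card_stepFinset : (stepFinset d).card = 2 * d := by
  rw [stepFinset, Finset.card_image_of_injective _ stepFinset_injective, Finset.card_univ,
    Fintype.card_prod, Fintype.card_fin, Fintype.card_bool, Nat.mul_comm]

lemma sum_stepFinset {M : Type*} [AddCommMonoid M] (f : Pt d → M) :
    ∑ e ∈ stepFinset d, f e = ∑ i : Fin d, (f (Pi.single i 1) + f (Pi.single i (-1))) := by
  rw [stepFinset, Finset.sum_image fun a _ b _ h => stepFinset_injective h,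
    Fintype.sum_prod_type]
  simp

lemma sum_stepFinset_apply (i : Fin d) : ∑ e ∈ stepFinset d, e i = 0 := by
  rw [sum_stepFinset fun e => e i]
  refine Finset.sum_eq_zero fun j _ => ?_
  simp only [Pi.single_apply]
  split <;> ring

lemma abs_apply_le_one_of_mem_stepFinset {e : Pt d} (he : e ∈ stepFinset d) (i : Fin d) :
    |e i| ≤ 1 := by
  obtain ⟨j, rfl | rfl⟩ := mem_stepFinset.1 he <;>
    rcases eq_or_ne i j with rfl | hij <;> simp [*]

lemma single_neg_one_mem_stepFinset (i : Fin d) : Pi.single i (-1 : ℤ) ∈ stepFinset d :=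
  mem_stepFinset.2 ⟨i, Or.inr rfl⟩

lemma single_one_mem_stepFinset (i : Fin d) : Pi.single i (1 : ℤ) ∈ stepFinset d :=
  mem_stepFinset.2 ⟨i, Or.inl rfl⟩

end Steps

section NbrMean
variable {d : ℕ}

noncomputable def nbrMean (d : ℕ) (f : Pt d → ℝ) (y : Pt d) : ℝ :=
  ((2 * d : ℕ) : ℝ)⁻¹ * ∑ e ∈ stepFinset d, f (y + e)

lemma nbrMean_mono {f g : Pt d → ℝ} {y : Pt d}
    (h : ∀ e ∈ stepFinset d, f (y + e) ≤ g (y + e)) : nbrMean d f y ≤ nbrMean d g y :=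
  mul_le_mul_of_nonneg_left (Finset.sum_le_sum h) (by positivity)

lemma nbrMean_nonneg {f : Pt d → ℝ} {y : Pt d} (h : ∀ e ∈ stepFinset d, 0 ≤ f (y + e)) :
    0 ≤ nbrMean d f y :=
  mul_nonneg (by positivity) (Finset.sum_nonneg h)

lemma nbrMean_const (hd : 0 < d) (c : ℝ) (y : Pt d) : nbrMean d (fun _ => c) y = c := by
  have : ((2 * d : ℕ) : ℝ) ≠ 0 := by positivity
  rw [nbrMean, Finset.sum_const, card_stepFinset, nsmul_eq_mul, ← mul_assoc,
    inv_mul_cancel₀ this, one_mul]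

lemma nbrMean_le_one (hd : 0 < d) {f : Pt d → ℝ} {y : Pt d}
    (h : ∀ e ∈ stepFinset d, f (y + e) ≤ 1) : nbrMean d f y ≤ 1 :=
  (nbrMean_mono (g := fun _ => 1) h).trans_eq (nbrMean_const hd 1 y)

lemma nbrMean_sub (f g : Pt d → ℝ) (y : Pt d) :
    nbrMean d (fun z => f z - g z) y = nbrMean d f y - nbrMean d g y := by
  simp only [nbrMean, Finset.sum_sub_distrib, mul_sub]

lemma nbrMean_sum {ι : Type*} (s : Finset ι) (f : ι → Pt d → ℝ) (y : Pt d) :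
    nbrMean d (fun z => ∑ i ∈ s, f i z) y = ∑ i ∈ s, nbrMean d (f i) y := by
  simp only [nbrMean, Finset.mul_sum]
  exact Finset.sum_comm

lemma nbrMean_affine (hd : 0 < d) (a b : ℝ) (i : Fin d) (y : Pt d) :
    nbrMean d (fun z => a + b * (z i : ℝ)) y = a + b * (y i : ℝ) := by
  have hcoord : ∑ e ∈ stepFinset d, ((e i : ℤ) : ℝ) = 0 := by
    rw [← Int.cast_sum, sum_stepFinset_apply, Int.cast_zero]
  have hsum : nbrMean d (fun z => a + b * (z i : ℝ)) y
      = nbrMean d (fun _ => a + b * (y i : ℝ)) y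
        + ((2 * d : ℕ) : ℝ)⁻¹ * (b * ∑ e ∈ stepFinset d, ((e i : ℤ) : ℝ)) := by
    simp only [nbrMean, Pi.add_apply, Int.cast_add, Finset.mul_sum, ← Finset.sum_add_distrib]
    exact Finset.sum_congr rfl fun e _ => by ring
  rw [hsum, hcoord, nbrMean_const hd, mul_zero, mul_zero, add_zero]

lemma nbrMean_comp_sub (f : Pt d → ℝ) (w y : Pt d) :
    nbrMean d (fun z => f (z - w)) y = nbrMean d f (y - w) := by
  simp only [nbrMean, sub_add_eq_add_sub]

lemma nbrMean_ge_of_mem {f : Pt d → ℝ} {y e : Pt d} (hf : ∀ e ∈ stepFinset d, 0 ≤ f (y + e))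
    (he : e ∈ stepFinset d) : ((2 * d : ℕ) : ℝ)⁻¹ * f (y + e) ≤ nbrMean d f y :=
  mul_le_mul_of_nonneg_left (Finset.single_le_sum hf he) (by positivity)

end NbrMean

section Prob
variable {d : ℕ}

lemma prob_eq_card (T : ℕ) (P : (Fin T → Pt d) → Prop) [DecidablePred P] :
    prob d T P =
      (((Fintype.piFinset fun _ : Fin T => stepFinset d).filter P).card : ℝ) /
        ((2 * d : ℕ) : ℝ) ^ T := by
  unfold prob
  congr 2
  rw [← Fintype.card_coe (((Fintype.piFinset fun _ : Fin T => stepFinset d).filter P)),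
    ← Nat.card_eq_fintype_card]
  refine Nat.card_congr (Equiv.subtypeEquivRight fun s => ?_).symm
  simp [Fintype.mem_piFinset, mem_stepFinset]

lemma prob_nonneg {T : ℕ} {P : (Fin T → Pt d) → Prop} : 0 ≤ prob d T P := by
  unfold prob
  positivity

lemma prob_congr {T : ℕ} {P Q : (Fin T → Pt d) → Prop} (h : ∀ s, P s ↔ Q s) :
    prob d T P = prob d T Q := by
  simp only [prob, h]

lemma prob_false {T : ℕ} : prob d T (fun _ => False) = 0 := by
  simp [prob]

lemma prob_zero_of_forall {P : (Fin 0 → Pt d) → Prop} (h : ∀ s, P s) : prob d 0 P = 1 := by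
  have : Unique {s : Fin 0 → Pt d // (∀ i, s i ∈ Dir d) ∧ P s} :=
    { default := ⟨fun i => i.elim0, fun i => i.elim0, h _⟩
      uniq := fun s => Subtype.ext (funext fun i => i.elim0) }
  rw [prob, Nat.card_unique]
  simp

lemma card_filter_piFinset_succ (T : ℕ) (P : (Fin (T + 1) → Pt d) → Prop) [DecidablePred P] :
    ((Fintype.piFinset fun _ : Fin (T + 1) => stepFinset d).filter P).card
      = ∑ e ∈ stepFinset d,
        ((Fintype.piFinset fun _ : Fin T => stepFinset d).filter
          fun s' => P (Fin.cons e s')).card := by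
  rw [Finset.card_eq_sum_card_fiberwise (f := fun s : Fin (T + 1) → Pt d => s 0)
    (t := stepFinset d) fun s hs => by
      rw [Finset.mem_coe, Finset.mem_filter, Fintype.mem_piFinset] at hs
      exact hs.1 0]
  refine Finset.sum_congr rfl fun e he => ?_
  refine Finset.card_bij' (fun s _ => Fin.tail s) (fun s' _ => Fin.cons e s') ?_ ?_ ?_ ?_
  · intro s hs
    simp only [Finset.mem_filter, Fintype.mem_piFinset] at hs ⊢
    obtain ⟨⟨hmem, hP⟩, rfl⟩ := hs
    exact ⟨fun i => hmem i.succ, by rwa [Fin.cons_self_tail]⟩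
  · intro s' hs'
    simp only [Finset.mem_filter, Fintype.mem_piFinset] at hs' ⊢
    refine ⟨⟨fun i => Fin.cases (by simpa using he) (fun j => by simpa using hs'.1 j) i,
      hs'.2⟩, by simp⟩
  · intro s hs
    simp only [Finset.mem_filter] at hs
    rw [← hs.2, Fin.cons_self_tail]
  · intro s' _
    funext i
    simp [Fin.tail]

lemma prob_succ (T : ℕ) (P : (Fin (T + 1) → Pt d) → Prop) :
    prob d (T + 1) P
      = ((2 * d : ℕ) : ℝ)⁻¹ * ∑ e ∈ stepFinset d, prob d T fun s' => P (Fin.cons e s') := by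
  classical
  rw [prob_eq_card, card_filter_piFinset_succ, Finset.mul_sum, Nat.cast_sum, Finset.sum_div]
  refine Finset.sum_congr rfl fun e _ => ?_
  rw [prob_eq_card, pow_succ, div_mul_eq_div_div, div_eq_inv_mul]

end Prob

section AvoidProb
variable {d : ℕ}

/-- The probability that the walk from `y` avoids `W` at times `1, …, T`. -/
noncomputable def avoidProb (d : ℕ) (W : Finset (Pt d)) : ℕ → Pt d → ℝ
  | 0, _ => 1
  | T + 1, y => nbrMean d (fun z => if z ∈ W then 0 else avoidProb d W T z) y

lemma wpos_zero (x : Pt d) {T : ℕ} (s : Fin T → Pt d) : wpos d x s 0 = x := by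
  simp [wpos]

lemma wpos_cons_succ (x e : Pt d) {T : ℕ} (s : Fin T → Pt d) (t : ℕ) :
    wpos d x (Fin.cons e s) (t + 1) = wpos d (x + e) s t := by
  simp only [wpos, Finset.sum_filter, Fin.sum_univ_succ, Fin.val_zero, Nat.zero_lt_succ,
    if_true, Fin.cons_zero, Fin.cons_succ, Fin.val_succ, Nat.succ_lt_succ_iff, add_assoc]

lemma prob_avoid_eq_avoidProb (W : Finset (Pt d)) (T : ℕ) (x : Pt d) :
    prob d T (fun s => ∀ t, 1 ≤ t → t ≤ T → wpos d x s t ∉ (W : Set (Pt d)))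
      = avoidProb d W T x := by
  induction T generalizing x with
  | zero => exact prob_zero_of_forall fun s t h1 h2 => absurd (h1.trans h2) (by omega)
  | succ T ih =>
    rw [prob_succ, avoidProb, nbrMean]
    congr 1
    refine Finset.sum_congr rfl fun e _ => ?_
    split_ifs with hW
    · rw [← prob_false (d := d) (T := T)]
      refine prob_congr fun s => iff_false_intro fun hall => hall 1 le_rfl (by omega) ?_
      simpa [wpos_cons_succ, wpos_zero] using hW
    · rw [← ih (x + e)]
      refine prob_congr fun s => ⟨fun hall t h1 h2 => ?_, fun hall t h1 h2 => ?_⟩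
      · simpa [wpos_cons_succ] using hall (t + 1) (by omega) (by omega)
      · obtain ⟨t, rfl⟩ := Nat.exists_eq_add_of_le' h1
        rw [wpos_cons_succ]
        rcases Nat.eq_zero_or_pos t with rfl | ht
        · simpa [wpos_zero] using hW
        · exact hall t ht (by omega)

lemma avoidProb_nonneg (W : Finset (Pt d)) (T : ℕ) (y : Pt d) : 0 ≤ avoidProb d W T y := by
  rw [← prob_avoid_eq_avoidProb]
  exact prob_nonneg

lemma avoidProb_le_one (hd : 0 < d) (W : Finset (Pt d)) (T : ℕ) (y : Pt d) :
    avoidProb d W T y ≤ 1 := by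
  induction T generalizing y with
  | zero => exact le_rfl
  | succ T ih =>
    refine nbrMean_le_one hd fun e _ => ?_
    split_ifs
    exacts [zero_le_one, ih _]

lemma ite_avoidProb_le_one (hd : 0 < d) (W : Finset (Pt d)) (T : ℕ) (z : Pt d) :
    (if z ∈ W then 0 else avoidProb d W T z) ≤ 1 := by
  split_ifs
  exacts [zero_le_one, avoidProb_le_one hd W T z]

lemma avoidProb_antitone (hd : 0 < d) (W : Finset (Pt d)) (y : Pt d) :
    Antitone fun T => avoidProb d W T y := by
  refine antitone_nat_of_succ_le fun T => ?_
  induction T generalizing y with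
  | zero => exact avoidProb_le_one hd W 1 y
  | succ T ih =>
    refine nbrMean_mono fun e _ => ?_
    split_ifs
    exacts [le_rfl, ih _]

lemma one_sub_avoidProb_succ (hd : 0 < d) (W : Finset (Pt d)) (T : ℕ) (y : Pt d) :
    1 - avoidProb d W (T + 1) y
      = nbrMean d (fun z => 1 - if z ∈ W then 0 else avoidProb d W T z) y := by
  rw [nbrMean_sub, nbrMean_const hd, avoidProb]

lemma one_sub_avoidProb_le_sum (hd : 0 < d) (W : Finset (Pt d)) (T : ℕ) (y : Pt d) :
    1 - avoidProb d W T y ≤ ∑ w ∈ W, (1 - avoidProb d {w} T y) := by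
  induction T generalizing y with
  | zero => simp [avoidProb]
  | succ T ih =>
    simp only [one_sub_avoidProb_succ hd, ← nbrMean_sum]
    refine nbrMean_mono fun e _ => ?_
    have hnonneg : ∀ w ∈ W,
        0 ≤ 1 - if y + e ∈ ({w} : Finset (Pt d)) then 0 else avoidProb d {w} T (y + e) :=
      fun w _ => sub_nonneg.2 (ite_avoidProb_le_one hd _ T _)
    split_ifs with hW
    · simpa using Finset.single_le_sum hnonneg hW
    · refine (ih (y + e)).trans_eq (Finset.sum_congr rfl fun w hw => ?_)
      rw [if_neg (by rintro h; exact hW (Finset.mem_singleton.1 h ▸ hw))]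

end AvoidProb

section Capacity
variable {d : ℕ}

lemma esc_eq_iInf_avoidProb (W : Finset (Pt d)) {x : Pt d} (hx : x ∈ W) :
    esc d (↑W) x = ⨅ T : ℕ, avoidProb d W T x := by
  rw [esc, if_pos (Finset.mem_coe.2 hx)]
  exact iInf_congr fun T => prob_avoid_eq_avoidProb W T x

lemma esc_nonneg (W : Set (Pt d)) (z : Pt d) : 0 ≤ esc d W z := by
  unfold esc
  split_ifs
  exacts [le_ciInf fun T => prob_nonneg, le_rfl]

lemma esc_le_one (W : Set (Pt d)) (z : Pt d) : esc d W z ≤ 1 := by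
  unfold esc
  split_ifs
  · refine (ciInf_le ⟨0, ?_⟩ 0).trans ?_
    · rintro r ⟨T, rfl⟩
      exact prob_nonneg
    · rw [prob_zero_of_forall fun s t h1 h2 => absurd (h1.trans h2) (by omega)]
  · exact zero_le_one

lemma capa_eq_sum (W : Finset (Pt d)) : capa d ↑W = ∑ z ∈ W, esc d ↑W z :=
  Finset.tsum_subtype' W (esc d ↑W)

lemma capa_le_card (W : Finset (Pt d)) : capa d ↑W ≤ W.card := by
  rw [capa_eq_sum]
  simpa using Finset.sum_le_sum fun z (_ : z ∈ W) => esc_le_one (↑W) z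

lemma esc_le_capa (W : Finset (Pt d)) {x : Pt d} (hx : x ∈ W) : esc d ↑W x ≤ capa d ↑W := by
  rw [capa_eq_sum]
  exact Finset.single_le_sum (fun z _ => esc_nonneg _ z) hx

end Capacity

section HitBound
variable {d : ℕ}

def sqNorm (v : Pt d) : ℤ := ∑ i, v i ^ 2

lemma sqNorm_nonneg (v : Pt d) : 0 ≤ sqNorm v :=
  Finset.sum_nonneg fun _ _ => sq_nonneg _

lemma sq_le_sqNorm (v : Pt d) (i : Fin d) : v i ^ 2 ≤ sqNorm v :=
  Finset.single_le_sum (f := fun j => v j ^ 2) (fun _ _ => sq_nonneg _) (Finset.mem_univ i)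

lemma sqNorm_pos {v : Pt d} (hv : v ≠ 0) : 0 < sqNorm v := by
  obtain ⟨i, hi⟩ := Function.ne_iff.mp hv
  have : 0 < v i ^ 2 := pow_two_pos_of_ne_zero hi
  exact this.trans_le (sq_le_sqNorm v i)

lemma sqNorm_add_single (v : Pt d) (i : Fin d) (ε : ℤ) :
    sqNorm (v + Pi.single i ε) = sqNorm v + 2 * ε * v i + ε ^ 2 := by
  have h : ∀ j, (v + Pi.single i ε : Pt d) j ^ 2
      = v j ^ 2 + (2 * v j * (Pi.single i ε : Pt d) j + (Pi.single i ε : Pt d) j ^ 2) :=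
    fun j => by
    rw [Pi.add_apply]; ring
  simp only [sqNorm, h, Finset.sum_add_distrib, Pi.single_apply, mul_ite, mul_zero,
    Finset.sum_ite_eq', Finset.mem_univ, if_true, ite_pow]
  simp only [ne_eq, OfNat.ofNat_ne_zero, not_false_eq_true, zero_pow, Finset.sum_ite_eq',
    Finset.mem_univ, if_true]
  ring

/-- `min 1 (36 / |v|²)`: it is superharmonic off the origin when `d ≥ 5`, so it dominates
the probability that the walk from `v` ever hits `0`. -/
noncomputable def hitBound (v : Pt d) : ℝ :=
  if v = 0 then 1 else min 1 (36 / (sqNorm v : ℝ))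

lemma hitBound_zero : hitBound (0 : Pt d) = 1 := by simp [hitBound]

lemma hitBound_nonneg (v : Pt d) : 0 ≤ hitBound v := by
  unfold hitBound
  split_ifs
  · exact zero_le_one
  · exact le_min zero_le_one (div_nonneg (by norm_num) (Int.cast_nonneg (sqNorm_nonneg v)))

lemma hitBound_le_one (v : Pt d) : hitBound v ≤ 1 := by
  unfold hitBound
  split_ifs
  exacts [le_rfl, min_le_left _ _]

lemma hitBound_le_div {v : Pt d} (hv : v ≠ 0) : hitBound v ≤ 36 / (sqNorm v : ℝ) := by
  rw [hitBound, if_neg hv]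
  exact min_le_right _ _

lemma hitBound_le_div_of_le {v : Pt d} {q : ℝ} (hq : 0 < q) (hvq : q ≤ sqNorm v) :
    hitBound v ≤ 36 / q := by
  have hv : v ≠ 0 := by
    rintro rfl
    simp [sqNorm] at hvq
    linarith
  exact (hitBound_le_div hv).trans (div_le_div_of_nonneg_left (by norm_num) hq hvq)

lemma div_add_div_le_taylor {a q : ℝ} (hq : 37 ≤ q) (ha : a ^ 2 ≤ q) :
    36 / (q + 1 + 2 * a) + 36 / (q + 1 - 2 * a)
      ≤ 72 / (q + 1) + 288 * a ^ 2 / (q + 1) ^ 3 + 2304 * a ^ 4 / (q + 1) ^ 5 := by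
  have hQ : 0 < q + 1 := by linarith
  have h8 : 8 * a ^ 2 ≤ (q + 1) ^ 2 := by nlinarith
  have h1 : 0 < q + 1 + 2 * a := by nlinarith
  have h2 : 0 < q + 1 - 2 * a := by nlinarith
  rw [div_add_div _ _ h1.ne' h2.ne', div_add_div _ _ (by positivity) (by positivity),
    div_add_div _ _ (by positivity) (by positivity), div_le_div_iff₀ (by positivity)
    (by positivity)]
  nlinarith [mul_le_mul_of_nonneg_left h8 (by positivity : (0 : ℝ) ≤ 1152 * a ^ 4),
    sq_nonneg a, sq_nonneg (a * a), pow_pos hQ 4, pow_pos hQ 11, pow_pos hQ 12,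
    mul_pos h1 h2]

lemma taylor_sum_le {q δ : ℝ} (hδ : 5 ≤ δ) (hq : 37 ≤ q) :
    72 * δ / (q + 1) + 288 * q / (q + 1) ^ 3 + 2304 * q ^ 2 / (q + 1) ^ 5
      ≤ 2 * δ * (36 / q) := by
  have hQ : 0 < q + 1 := by linarith
  have hL : 72 * δ / (q + 1) + 288 * q / (q + 1) ^ 3 + 2304 * q ^ 2 / (q + 1) ^ 5
      = (72 * δ * (q + 1) ^ 4 + 288 * q * (q + 1) ^ 2 + 2304 * q ^ 2) / (q + 1) ^ 5 := by
    field_simp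
  rw [hL, show 2 * δ * (36 / q) = 72 * δ / q by ring,
    div_le_div_iff₀ (by positivity) (by linarith)]
  have e1 : 288 * q ^ 2 * (q + 1) ^ 2 ≤ 288 * (q + 1) ^ 4 := by nlinarith
  have e2 : 2304 * q ^ 3 ≤ 2304 * (q + 1) ^ 3 := by nlinarith
  have e3 : 38 * (q + 1) ^ 3 ≤ (q + 1) ^ 4 := by nlinarith
  nlinarith [pow_pos hQ 3, pow_pos hQ 4]

lemma hitBound_add_single_add_le {v : Pt d} (hq : 37 ≤ sqNorm v) (i : Fin d) :
    hitBound (v + Pi.single i 1) + hitBound (v + Pi.single i (-1))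
      ≤ 72 / ((sqNorm v : ℝ) + 1) + 288 * (v i : ℝ) ^ 2 / ((sqNorm v : ℝ) + 1) ^ 3
        + 2304 * (v i : ℝ) ^ 4 / ((sqNorm v : ℝ) + 1) ^ 5 := by
  have hqR : (37 : ℝ) ≤ sqNorm v := by exact_mod_cast hq
  have hsq : (v i : ℝ) ^ 2 ≤ sqNorm v := by exact_mod_cast sq_le_sqNorm v i
  have hbound : ∀ ε : ℤ, ε = 1 ∨ ε = -1 →
      hitBound (v + Pi.single i ε) ≤ 36 / ((sqNorm v : ℝ) + 1 + 2 * ε * v i) := by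
    intro ε hε
    have hε2 : ε ^ 2 = 1 := by rcases hε with rfl | rfl <;> norm_num
    refine hitBound_le_div_of_le (by rcases hε with rfl | rfl <;> push_cast <;> nlinarith)
      (le_of_eq ?_)
    rw [sqNorm_add_single, add_right_comm, hε2]
    push_cast
    ring
  calc hitBound (v + Pi.single i 1) + hitBound (v + Pi.single i (-1))
      ≤ 36 / ((sqNorm v : ℝ) + 1 + 2 * (v i : ℝ))
        + 36 / ((sqNorm v : ℝ) + 1 - 2 * (v i : ℝ)) := by
        refine add_le_add ((hbound 1 (Or.inl rfl)).trans_eq ?_)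
          ((hbound (-1) (Or.inr rfl)).trans_eq ?_) <;> push_cast <;> ring_nf
    _ ≤ _ := div_add_div_le_taylor hqR hsq

lemma nbrMean_hitBound_le (hd : 5 ≤ d) {v : Pt d} (hv : v ≠ 0) :
    nbrMean d hitBound v ≤ hitBound v := by
  rcases le_or_gt (sqNorm v) 36 with hsmall | hlarge
  · have hone : hitBound v = 1 := by
      rw [hitBound, if_neg hv, min_eq_left]
      rw [le_div_iff₀ (by exact_mod_cast sqNorm_pos hv), one_mul]
      exact_mod_cast hsmall
    exact hone ▸ nbrMean_le_one (by omega) fun e _ => hitBound_le_one _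
  set q : ℝ := (sqNorm v : ℝ) with hq
  have hq37 : (37 : ℝ) ≤ q := by rw [hq]; exact_mod_cast hlarge
  have hval : hitBound v = 36 / q := by
    rw [hitBound, if_neg hv, min_eq_right]
    rw [div_le_one (by linarith)]
    linarith
  have hsum2 : ∑ i, (v i : ℝ) ^ 2 = q := by simp [hq, sqNorm]
  have hsum4 : ∑ i, (v i : ℝ) ^ 4 ≤ q ^ 2 := calc
    ∑ i, (v i : ℝ) ^ 4 ≤ ∑ i, (v i : ℝ) ^ 2 * q := Finset.sum_le_sum fun i _ => by
        have : (v i : ℝ) ^ 2 ≤ q := by rw [hq]; exact_mod_cast sq_le_sqNorm v i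
        nlinarith [sq_nonneg ((v i : ℝ))]
    _ = q ^ 2 := by rw [← Finset.sum_mul, hsum2, sq]
  have h2d : (0 : ℝ) < ((2 * d : ℕ) : ℝ) := by positivity
  rw [hval, nbrMean, inv_mul_le_iff₀ h2d]
  calc ∑ e ∈ stepFinset d, hitBound (v + e)
      = ∑ i, (hitBound (v + Pi.single i 1) + hitBound (v + Pi.single i (-1))) :=
        sum_stepFinset _
    _ ≤ ∑ i, (72 / (q + 1) + 288 * (v i : ℝ) ^ 2 / (q + 1) ^ 3
          + 2304 * (v i : ℝ) ^ 4 / (q + 1) ^ 5) :=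
        Finset.sum_le_sum fun i _ => hitBound_add_single_add_le hlarge i
    _ = 72 * d / (q + 1) + 288 * q / (q + 1) ^ 3
          + 2304 * (∑ i, (v i : ℝ) ^ 4) / (q + 1) ^ 5 := by
        simp only [Finset.sum_add_distrib, Finset.sum_const, Finset.card_univ, Fintype.card_fin,
          ← Finset.sum_div, ← Finset.mul_sum, hsum2, nsmul_eq_mul]
        ring
    _ ≤ 72 * d / (q + 1) + 288 * q / (q + 1) ^ 3 + 2304 * q ^ 2 / (q + 1) ^ 5 := by
        gcongr
    _ ≤ 2 * d * (36 / q) := taylor_sum_le (by exact_mod_cast hd) hq37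
    _ = ((2 * d : ℕ) : ℝ) * (36 / q) := by push_cast; ring

lemma nbrMean_hitBound_sub_le (hd : 5 ≤ d) {y w : Pt d} (hyw : y ≠ w) :
    nbrMean d (fun z => hitBound (z - w)) y ≤ hitBound (y - w) := by
  rw [nbrMean_comp_sub]
  exact nbrMean_hitBound_le hd (sub_ne_zero.2 hyw)

lemma one_sub_avoidProb_singleton_le (hd : 5 ≤ d) (w : Pt d) (T : ℕ) {y : Pt d}
    (hyw : y ≠ w) : 1 - avoidProb d {w} T y ≤ hitBound (y - w) := by
  induction T generalizing y with
  | zero => simpa [avoidProb] using hitBound_nonneg (y - w)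
  | succ T ih =>
    rw [one_sub_avoidProb_succ (by omega)]
    refine (nbrMean_mono fun e _ => ?_).trans (nbrMean_hitBound_sub_le hd hyw)
    by_cases he : y + e = w
    · simp [he, hitBound_zero]
    · rw [if_neg (by simpa using he)]
      exact ih he

lemma one_sub_sum_hitBound_le_avoidProb (hd : 5 ≤ d) (W : Finset (Pt d)) (T : ℕ)
    {y : Pt d} (hy : y ∉ W) : 1 - ∑ w ∈ W, hitBound (y - w) ≤ avoidProb d W T y := by
  have h := (one_sub_avoidProb_le_sum (by omega) W T y).trans (Finset.sum_le_sum fun w hw =>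
    one_sub_avoidProb_singleton_le hd w T (y := y) fun h => hy (h ▸ hw))
  linarith

lemma sum_hitBound_le_card_mul {W : Finset (Pt d)} {y : Pt d} {q : ℝ} (hq : 0 < q)
    (h : ∀ w ∈ W, q ≤ sqNorm (y - w)) : ∑ w ∈ W, hitBound (y - w) ≤ W.card * (36 / q) := by
  simpa using Finset.sum_le_sum fun w hw => hitBound_le_div_of_le hq (h w hw)

end HitBound

section Slab
variable {d : ℕ} {c : ℤ} {K : ℕ} {i : Fin d}

/-- The probability that the walk from `y` stays `t` steps in the slab `0 < c - z i < K`. -/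
noncomputable def slabSurv (d : ℕ) (c : ℤ) (K : ℕ) (i : Fin d) : ℕ → Pt d → ℝ
  | 0, y => if 0 < c - y i ∧ c - y i < K then 1 else 0
  | t + 1, y => if 0 < c - y i ∧ c - y i < K then nbrMean d (slabSurv d c K i t) y else 0

lemma slabSurv_nonneg (t : ℕ) (y : Pt d) : 0 ≤ slabSurv d c K i t y := by
  induction t generalizing y with
  | zero => rw [slabSurv]; split_ifs <;> norm_num
  | succ t ih =>
    rw [slabSurv]
    split_ifs
    exacts [nbrMean_nonneg fun e _ => ih _, le_rfl]

lemma slabSurv_le_one (hd : 0 < d) (t : ℕ) (y : Pt d) : slabSurv d c K i t y ≤ 1 := by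
  induction t generalizing y with
  | zero => rw [slabSurv]; split_ifs <;> norm_num
  | succ t ih =>
    rw [slabSurv]
    split_ifs
    exacts [nbrMean_le_one hd fun e _ => ih _, zero_le_one]

lemma slabSurv_of_not_mem {t : ℕ} {y : Pt d} (h : ¬(0 < c - y i ∧ c - y i < K)) :
    slabSurv d c K i t y = 0 := by
  cases t <;> rw [slabSurv, if_neg h]

lemma slabSurv_succ_of_mem {t : ℕ} {y : Pt d} (h : 0 < c - y i ∧ c - y i < K) :
    slabSurv d c K i (t + 1) y = nbrMean d (slabSurv d c K i t) y := by
  rw [slabSurv, if_pos h]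

lemma inv_two_mul_le_one (hd : 0 < d) : ((2 * d : ℕ) : ℝ)⁻¹ ≤ 1 :=
  inv_le_one_of_one_le₀ (by exact_mod_cast (by omega : 1 ≤ 2 * d))

/-- Within `k` steps the walk leaves the slab with probability at least `(2d)⁻ᵏ`, by stepping
in direction `+eᵢ` each time. -/
lemma slabSurv_le_one_sub_pow (hd : 0 < d) (t : ℕ) (y : Pt d) (ht : (c - y i).toNat ≤ t) :
    slabSurv d c K i t y ≤ 1 - ((2 * d : ℕ) : ℝ)⁻¹ ^ (c - y i).toNat := by
  set p : ℝ := ((2 * d : ℕ) : ℝ)⁻¹ with hp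
  have hp0 : 0 < p := by positivity
  induction t generalizing y with
  | zero =>
    rw [Nat.le_zero.1 ht, pow_zero, slabSurv_of_not_mem (by omega), sub_self]
  | succ t ih =>
    by_cases hin : 0 < c - y i ∧ c - y i < K
    swap
    · rw [slabSurv_of_not_mem hin, sub_nonneg]
      exact pow_le_one₀ hp0.le (inv_two_mul_le_one hd)
    set k := (c - y i).toNat with hk
    have hup := single_one_mem_stepFinset (d := d) i
    have hdepth : (c - (y + Pi.single i (1 : ℤ) : Pt d) i).toNat = k - 1 := by
      rw [Pi.add_apply, Pi.single_eq_same]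
      omega
    have hfirst : slabSurv d c K i t (y + Pi.single i 1) ≤ 1 - p ^ (k - 1) :=
      hdepth ▸ ih _ (by omega)
    have hrest : ∑ e ∈ (stepFinset d).erase (Pi.single i 1), slabSurv d c K i t (y + e)
        ≤ ((2 * d : ℕ) : ℝ) - 1 := by
      refine (Finset.sum_le_card_nsmul _ _ 1 fun e _ => slabSurv_le_one hd t _).trans_eq ?_
      rw [Finset.card_erase_of_mem hup, card_stepFinset, nsmul_one, Nat.cast_sub (by omega),
        Nat.cast_one]
    have hpk : p ^ k = p ^ (k - 1) * p := by rw [← pow_succ]; congr 1; omega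
    rw [slabSurv_succ_of_mem hin, nbrMean, ← Finset.add_sum_erase _ _ hup, ← hp, hpk]
    calc p * (slabSurv d c K i t (y + Pi.single i 1)
          + ∑ e ∈ (stepFinset d).erase (Pi.single i 1), slabSurv d c K i t (y + e))
        ≤ p * ((1 - p ^ (k - 1)) + (((2 * d : ℕ) : ℝ) - 1)) := by gcongr
      _ = 1 - p ^ (k - 1) * p := by
        rw [hp]
        field_simp
        ring

lemma slabSurv_self_le (hd : 0 < d) (y : Pt d) :
    slabSurv d c K i K y ≤ 1 - ((2 * d : ℕ) : ℝ)⁻¹ ^ K := by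
  by_cases hin : 0 < c - y i ∧ c - y i < K
  · refine (slabSurv_le_one_sub_pow hd K y (by omega)).trans (sub_le_sub_left ?_ 1)
    exact pow_le_pow_of_le_one (by positivity) (inv_two_mul_le_one hd) (by omega)
  · rw [slabSurv_of_not_mem hin, sub_nonneg]
    exact pow_le_one₀ (by positivity) (inv_two_mul_le_one hd)

lemma slabSurv_add_le_mul {b : ℕ} {β : ℝ} (hβ : ∀ z, slabSurv d c K i b z ≤ β) (a : ℕ)
    (y : Pt d) : slabSurv d c K i (a + b) y ≤ slabSurv d c K i a y * β := by
  induction a generalizing y with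
  | zero =>
    by_cases hin : 0 < c - y i ∧ c - y i < K
    · rw [slabSurv, if_pos hin, one_mul, zero_add]
      exact hβ y
    · rw [slabSurv_of_not_mem hin, slabSurv_of_not_mem hin, zero_mul]
  | succ a ih =>
    by_cases hin : 0 < c - y i ∧ c - y i < K
    · rw [show a + 1 + b = a + b + 1 by omega, slabSurv_succ_of_mem hin,
        slabSurv_succ_of_mem hin, nbrMean, nbrMean, mul_assoc, Finset.sum_mul]
      gcongr with e
      exact ih _
    · rw [slabSurv_of_not_mem hin, slabSurv_of_not_mem hin, zero_mul]

lemma slabSurv_le_pow (hd : 0 < d) (T j : ℕ) (y : Pt d) :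
    slabSurv d c K i (T + j * K) y ≤ (1 - ((2 * d : ℕ) : ℝ)⁻¹ ^ K) ^ j := by
  have hβ0 : 0 ≤ 1 - ((2 * d : ℕ) : ℝ)⁻¹ ^ K :=
    sub_nonneg.2 (pow_le_one₀ (by positivity) (inv_two_mul_le_one hd))
  induction j generalizing y with
  | zero => simpa using slabSurv_le_one hd T y
  | succ j ih =>
    rw [show T + (j + 1) * K = T + j * K + K by ring, pow_succ]
    exact (slabSurv_add_le_mul (slabSurv_self_le hd) _ y).trans
      (mul_le_mul_of_nonneg_right (ih y) hβ0)

end Slab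

section Barrier
variable {d : ℕ} {A B : Finset (Pt d)} {c : ℤ} {K : ℕ} {i : Fin d} {α : ℝ}

/-- A lower barrier for `avoidProb d (A ∪ B) t` on the slab `0 ≤ c - y i ≤ K`, when `A` lies in
the half-space `c ≤ a i`: the depth `c - y i` is harmonic, the sum of the `hitBound`s over `B`
is superharmonic, and `slabSurv` corrects for the walks that have not yet left the slab. -/
noncomputable def barrier (d : ℕ) (B : Finset (Pt d)) (c : ℤ) (K : ℕ) (i : Fin d) (α : ℝ)
    (t : ℕ) (y : Pt d) : ℝ :=
  α * ((c - y i : ℤ) : ℝ) / K - ∑ b ∈ B, hitBound (y - b) - slabSurv d c K i t y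

lemma nbrMean_depth (hd : 0 < d) (α : ℝ) (y : Pt d) :
    nbrMean d (fun z => α * ((c - z i : ℤ) : ℝ) / K) y = α * ((c - y i : ℤ) : ℝ) / K := by
  have h : (fun z : Pt d => α * ((c - z i : ℤ) : ℝ) / K)
      = fun z => α * c / K + -(α / K) * (z i : ℝ) := by
    funext z
    push_cast
    ring
  rw [h, nbrMean_affine hd]
  push_cast
  ring

lemma barrier_le (hα0 : 0 ≤ α) (hα1 : α ≤ 1) (t : ℕ) {y : Pt d} (hK : c - y i ≤ K) : barrier d B c K i α t y ≤ 1 - ∑ b ∈ B, hitBound (y - b) := by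
  have hdepth : α * ((c - y i : ℤ) : ℝ) / K ≤ 1 := by
    rcases Nat.eq_zero_or_pos K with rfl | hK0
    · simp
    rw [div_le_one (by positivity)]
    have : ((c - y i : ℤ) : ℝ) ≤ K := by exact_mod_cast hK
    nlinarith
  have := slabSurv_nonneg (c := c) (K := K) (i := i) t y
  unfold barrier
  linarith

lemma barrier_nonpos_of_mem (hα0 : 0 ≤ α) (hα1 : α ≤ 1) (t : ℕ) {y : Pt d} (hy : y ∈ B)
    (hK : c - y i ≤ K) : barrier d B c K i α t y ≤ 0 := by
  have := Finset.single_le_sum (fun b _ => hitBound_nonneg (y - b)) hy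
  rw [sub_self, hitBound_zero] at this
  linarith [barrier_le (B := B) hα0 hα1 t hK]

lemma barrier_nonpos_of_depth_eq_zero (t : ℕ) {y : Pt d} (h : c - y i = 0) :
    barrier d B c K i α t y ≤ 0 := by
  have := slabSurv_nonneg (c := c) (K := K) (i := i) t y
  have := Finset.sum_nonneg fun b (_ : b ∈ B) => hitBound_nonneg (y - b)
  simp only [barrier, h, Int.cast_zero, mul_zero, zero_div]
  linarith

lemma barrier_succ_le_nbrMean (hd : 5 ≤ d) (t : ℕ) {y : Pt d} (hy : y ∉ B)
    (hin : 0 < c - y i ∧ c - y i < K) :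
    barrier d B c K i α (t + 1) y ≤ nbrMean d (barrier d B c K i α t) y := by
  have hmean : nbrMean d (barrier d B c K i α t) y
      = nbrMean d (fun z => α * ((c - z i : ℤ) : ℝ) / K) y
        - nbrMean d (fun z => ∑ b ∈ B, hitBound (z - b)) y
        - nbrMean d (slabSurv d c K i t) y := by
    rw [← nbrMean_sub, ← nbrMean_sub]
    rfl
  have hsuper : nbrMean d (fun z => ∑ b ∈ B, hitBound (z - b)) y
      ≤ ∑ b ∈ B, hitBound (y - b) := by
    rw [nbrMean_sum]
    exact Finset.sum_le_sum fun b hb => nbrMean_hitBound_sub_le hd fun h => hy (h ▸ hb)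
  rw [hmean, nbrMean_depth (by omega), barrier, slabSurv_succ_of_mem hin]
  linarith

lemma barrier_le_ite_avoidProb (hα0 : 0 ≤ α) (hα1 : α ≤ 1) (hA : ∀ a ∈ A, c ≤ a i) {t : ℕ}
    {z : Pt d} (h0 : 0 ≤ c - z i) (hK : c - z i ≤ K)
    (h : barrier d B c K i α t z ≤ avoidProb d (A ∪ B) t z) :
    barrier d B c K i α t z ≤ if z ∈ A ∪ B then 0 else avoidProb d (A ∪ B) t z := by
  split_ifs with hmem
  · rcases Finset.mem_union.1 hmem with hzA | hzB
    · exact barrier_nonpos_of_depth_eq_zero _ (le_antisymm (by linarith [hA _ hzA]) h0)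
    · exact barrier_nonpos_of_mem hα0 hα1 _ hzB hK
  · exact h

lemma barrier_le_avoidProb (hd : 5 ≤ d) (hα0 : 0 ≤ α) (hα1 : α ≤ 1) (hA : ∀ a ∈ A, c ≤ a i)
    (hdeep : ∀ y : Pt d, c - y i = K → ∑ a ∈ A, hitBound (y - a) ≤ 1 - α)
    (t : ℕ) {y : Pt d} (h0 : 0 ≤ c - y i) (hK : c - y i ≤ K) :
    barrier d B c K i α t y ≤ avoidProb d (A ∪ B) t y := by
  induction t generalizing y with
  | zero =>
    have := Finset.sum_nonneg fun b (_ : b ∈ B) => hitBound_nonneg (y - b)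
    linarith [barrier_le (B := B) hα0 hα1 0 hK, show avoidProb d (A ∪ B) 0 y = 1 from rfl]
  | succ t ih =>
    rcases h0.eq_or_lt with hzero | hpos
    · exact (barrier_nonpos_of_depth_eq_zero _ hzero.symm).trans (avoidProb_nonneg _ _ _)
    by_cases hyB : y ∈ B
    · exact (barrier_nonpos_of_mem hα0 hα1 _ hyB hK).trans (avoidProb_nonneg _ _ _)
    rcases hK.eq_or_lt with hdepth | hlt
    · have hyA : y ∉ A := fun hyA => by linarith [hA y hyA]
      have hunion := Finset.sum_union_inter (s₁ := A) (s₂ := B) (f := fun w => hitBound (y - w))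
      have hinter := Finset.sum_nonneg fun w (_ : w ∈ A ∩ B) => hitBound_nonneg (y - w)
      have hhit := one_sub_sum_hitBound_le_avoidProb hd (A ∪ B) (t + 1)
        (Finset.notMem_union.2 ⟨hyA, hyB⟩)
      have := slabSurv_nonneg (c := c) (K := K) (i := i) (t + 1) y
      have hK0 : (K : ℝ) ≠ 0 := by exact_mod_cast (by omega : K ≠ 0)
      simp only [barrier, hdepth, Int.cast_natCast, mul_div_assoc, div_self hK0, mul_one]
      linarith [hdeep y hdepth]
    · refine (barrier_succ_le_nbrMean hd t hyB ⟨hpos, hlt⟩).trans (nbrMean_mono fun e he => ?_)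
      have hei := abs_le.1 (abs_apply_le_one_of_mem_stepFinset he i)
      have h0' : 0 ≤ c - (y + e) i := by rw [Pi.add_apply]; omega
      have hK' : c - (y + e) i ≤ K := by rw [Pi.add_apply]; omega
      exact barrier_le_ite_avoidProb hα0 hα1 hA h0' hK' (ih h0' hK')


/-- The walk from `x` first steps to `x - eᵢ`, at depth `1` in the slab, where the barrier is
at least `α / K - δ` up to the exponentially small probability of staying in the slab. -/
lemma inv_two_mul_le_esc (hd : 5 ≤ d) {x : Pt d} (hx : x ∈ A) (hA : ∀ a ∈ A, x i ≤ a i)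
    (hK : 0 < K) (hα0 : 0 ≤ α) (hα1 : α ≤ 1)
    (hdeep : ∀ y : Pt d, x i - y i = K → ∑ a ∈ A, hitBound (y - a) ≤ 1 - α) {δ : ℝ}
    (hB : ∑ b ∈ B, hitBound (x + Pi.single i (-1) - b) ≤ δ) :
    ((2 * d : ℕ) : ℝ)⁻¹ * (α / K - δ) ≤ esc d ↑(A ∪ B) x := by
  set y := x + Pi.single i (-1) with hy
  have hdepth : x i - y i = 1 := by simp [hy]
  set β : ℝ := 1 - ((2 * d : ℕ) : ℝ)⁻¹ ^ K with hβ
  have hβ0 : 0 ≤ β := sub_nonneg.2 (pow_le_one₀ (by positivity) (inv_two_mul_le_one (by omega)))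
  have hβ1 : β < 1 := by
    have : (0 : ℝ) < ((2 * d : ℕ) : ℝ)⁻¹ ^ K := by positivity
    linarith
  have hstep : ∀ T j : ℕ, ((2 * d : ℕ) : ℝ)⁻¹ * (α / K - δ - β ^ j)
      ≤ avoidProb d (A ∪ B) T x := by
    intro T j
    have hbarrier : α / K - δ - β ^ j ≤ barrier d B (x i) K i α (T + j * K) y := by
      have := slabSurv_le_pow (c := x i) (K := K) (i := i) (by omega) T j y
      simp only [barrier, hdepth, Int.cast_one, mul_one]
      linarith
    have hclip := barrier_le_ite_avoidProb (B := B) hα0 hα1 hA (by omega) (by omega)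
      (barrier_le_avoidProb hd hα0 hα1 hA hdeep (T + j * K) (y := y) (by omega) (by omega))
    refine le_trans ?_ (avoidProb_antitone (by omega) (A ∪ B) x
      (show T ≤ T + j * K + 1 by omega))
    refine le_trans ?_ (nbrMean_ge_of_mem (fun e _ => ?_) (single_neg_one_mem_stepFinset i))
    · exact mul_le_mul_of_nonneg_left (hbarrier.trans hclip) (by positivity)
    · split_ifs
      exacts [le_rfl, avoidProb_nonneg _ _ _]
  have hlim : Filter.Tendsto (fun j : ℕ => ((2 * d : ℕ) : ℝ)⁻¹ * (α / K - δ - β ^ j))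
      Filter.atTop (nhds (((2 * d : ℕ) : ℝ)⁻¹ * (α / K - δ))) := by
    simpa using ((tendsto_pow_atTop_nhds_zero_of_lt_one hβ0 hβ1).const_sub (α / K - δ)).const_mul
      (((2 * d : ℕ) : ℝ)⁻¹)
  rw [esc_eq_iInf_avoidProb _ (Finset.mem_union_left B hx)]
  exact le_ciInf fun T => le_of_tendsto' hlim (hstep T)

end Barrier

section Assembly
variable {d : ℕ}

lemma sum_hitBound_le_of_le_apply_sub {W : Finset (Pt d)} {y : Pt d} {i : Fin d} {K : ℕ}
    (hK : 0 < K) (h : ∀ w ∈ W, (K : ℤ) ≤ w i - y i) :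
    ∑ w ∈ W, hitBound (y - w) ≤ W.card * (36 / (K : ℝ) ^ 2) := by
  refine sum_hitBound_le_card_mul (by positivity) fun w hw => ?_
  have hsq : (K : ℤ) ^ 2 ≤ (y - w) i ^ 2 := by
    rw [Pi.sub_apply, ← neg_sub, neg_sq]
    exact pow_le_pow_left₀ (by positivity) (h w hw) 2
  exact_mod_cast hsq.trans (sq_le_sqNorm _ i)

lemma dist0_eq_sqrt_sqNorm (x y : Pt d) : dist0 d x y = √(sqNorm (x - y) : ℝ) := by
  simp [dist0, sqNorm]

lemma le_dist0_of_le_setDist {A B : Finset (Pt d)} {r : ℝ} (h : r ≤ setDist d A B) {x b : Pt d}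
    (hx : x ∈ A) (hb : b ∈ B) : r ≤ dist0 d x b :=
  h.trans (csInf_le ⟨0, by rintro _ ⟨_, _, _, _, rfl⟩; exact Real.sqrt_nonneg _⟩
    ⟨x, hx, b, hb, rfl⟩)

lemma sq_sqrt_sqNorm_sub_one_le (v : Pt d) (i : Fin d) :
    (√(sqNorm v : ℝ) - 1) ^ 2 ≤ sqNorm (v + Pi.single i (-1)) := by
  have hq : (0 : ℝ) ≤ sqNorm v := by exact_mod_cast sqNorm_nonneg v
  have hvi : (v i : ℝ) ≤ √(sqNorm v : ℝ) :=
    Real.le_sqrt_of_sq_le (by exact_mod_cast sq_le_sqNorm v i)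
  rw [sqNorm_add_single]
  push_cast
  nlinarith [Real.sq_sqrt hq]

lemma le_sqNorm_of_le_setDist {A B : Finset (Pt d)} {m : ℝ} (hm : 0 ≤ m)
    (h : 1 + √m ≤ setDist d A B) {x b : Pt d} (hx : x ∈ A) (hb : b ∈ B) (i : Fin d) :
    m ≤ sqNorm (x + Pi.single i (-1) - b) := by
  have hs := le_dist0_of_le_setDist h hx hb
  rw [dist0_eq_sqrt_sqNorm] at hs
  rw [add_sub_right_comm]
  calc m = √m ^ 2 := (Real.sq_sqrt hm).symm
    _ ≤ (√(sqNorm (x - b) : ℝ) - 1) ^ 2 := by gcongr; linarith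
    _ ≤ _ := sq_sqrt_sqNorm_sub_one_le _ i

lemma IsLex.apply_zero_le {A : Finset (Pt d)} {x : Pt d} (h : IsLex d A x) (hd : 0 < d) :
    ∀ a ∈ A, x ⟨0, hd⟩ ≤ a ⟨0, hd⟩ := by
  intro a ha
  rcases eq_or_ne a x with rfl | hne
  · exact le_rfl
  obtain ⟨i, hbefore, hlt⟩ := h.2 a ha hne
  rcases eq_or_ne i ⟨0, hd⟩ with rfl | hi
  · exact hlt.le
  · exact (hbefore _ (Fin.lt_def.2 (Nat.pos_of_ne_zero fun h0 => hi (Fin.ext h0)))).le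

lemma esc_div_card_le_harm (W : Finset (Pt d)) {x : Pt d} (hx : x ∈ W)
    (hesc : 0 < esc d ↑W x) : esc d ↑W x / W.card ≤ harm d ↑W x :=
  div_le_div_of_nonneg_left hesc.le (hesc.trans_le (esc_le_capa W hx)) (capa_le_card W)

lemma five_div_le_esc (hd : 5 ≤ d) {A B : Finset (Pt d)} {x : Pt d} (hx : IsLex d A x)
    {K : ℕ} (hK : 144 * ((A ∪ B).card : ℝ) ≤ (K : ℝ) ^ 2)
    (hdist : 1 + √(288 * (A ∪ B).card * K) ≤ setDist d A B) :
    5 / (16 * d * K) ≤ esc d ↑(A ∪ B) x := by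
  set n : ℝ := ((A ∪ B).card : ℝ) with hn
  have hn1 : 1 ≤ n := by
    rw [hn, Nat.one_le_cast]
    exact Finset.card_pos.2 ⟨x, Finset.mem_union_left B hx.1⟩
  have hK0 : 0 < K := by
    rcases Nat.eq_zero_or_pos K with rfl | h
    · norm_num at hK; linarith
    · exact h
  have hKR : (0 : ℝ) < K := by exact_mod_cast hK0
  set i : Fin d := ⟨0, by omega⟩
  have hA : ∀ a ∈ A, x i ≤ a i := hx.apply_zero_le (by omega)
  have hα : 36 * n / (K : ℝ) ^ 2 ≤ 1 / 4 := by
    rw [div_le_iff₀ (by positivity)]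
    linarith
  have hα0 : 0 ≤ 36 * n / (K : ℝ) ^ 2 := by positivity
  have hdeep : ∀ y : Pt d, x i - y i = K →
      ∑ a ∈ A, hitBound (y - a) ≤ 1 - (1 - 36 * n / (K : ℝ) ^ 2) := by
    intro y hy
    refine (sum_hitBound_le_of_le_apply_sub (i := i) hK0 fun a ha => ?_).trans ?_
    · linarith [hA a ha]
    · have hcard : (A.card : ℝ) ≤ n := by
        rw [hn]
        exact_mod_cast Finset.card_le_card Finset.subset_union_left
      rw [sub_sub_cancel, mul_comm 36 n, mul_div_assoc]
      gcongr
  have hB : ∑ b ∈ B, hitBound (x + Pi.single i (-1) - b) ≤ 1 / (8 * K) := by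
    refine (sum_hitBound_le_card_mul (q := 288 * n * K) (by positivity) fun b hb =>
      le_sqNorm_of_le_setDist (by positivity) hdist hx.1 hb _).trans ?_
    have : (B.card : ℝ) ≤ n := by
      rw [hn]
      exact_mod_cast Finset.card_le_card Finset.subset_union_right
    rw [mul_div_assoc', div_le_div_iff₀ (by positivity) (by positivity)]
    nlinarith
  refine le_trans ?_ (inv_two_mul_le_esc hd hx.1 hA hK0 (by linarith) (by linarith) hdeep hB)
  rw [show 5 / (16 * (d : ℝ) * K) = ((2 * d : ℕ) : ℝ)⁻¹ * (3 / 4 / K - 1 / (8 * K)) by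
    push_cast; field_simp; ring]
  gcongr
  linarith

lemma twelve_mul_ceil_rpow_bounds {n : ℕ} (hn : 1 ≤ n) :
    144 * (n : ℝ) ≤ ((12 * ⌈(n : ℝ) ^ (0.8 : ℝ)⌉₊ : ℕ) : ℝ) ^ 2 ∧
      ((12 * ⌈(n : ℝ) ^ (0.8 : ℝ)⌉₊ : ℕ) : ℝ) ≤ 24 * (n : ℝ) ^ (0.8 : ℝ) := by
  have hn1 : (1 : ℝ) ≤ n := by exact_mod_cast hn
  have hpow1 : 1 ≤ (n : ℝ) ^ (0.8 : ℝ) := Real.one_le_rpow hn1 (by norm_num)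
  have hceil := Nat.le_ceil ((n : ℝ) ^ (0.8 : ℝ))
  have hceil' := Nat.ceil_lt_add_one (by positivity : (0 : ℝ) ≤ (n : ℝ) ^ (0.8 : ℝ))
  have hsq : (n : ℝ) ≤ (n : ℝ) ^ (0.8 : ℝ) * (n : ℝ) ^ (0.8 : ℝ) := by
    rw [← Real.rpow_add (by positivity)]
    simpa using Real.rpow_le_rpow_of_exponent_le hn1 (by norm_num : (1 : ℝ) ≤ 0.8 + 0.8)
  push_cast
  constructor <;> nlinarith

end Assembly

/-- **Harmonic measure of lex elements.** Let `d ≥ 5`. There are `r = r(n,d)` and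
`c = c(d) > 0` such that if `A ∪ B` is an `n`-element subset of `ℤ^d` with
`dist(A,B) ≥ r` and `x` is lex in `A`, then `esc_{A∪B}(x) ≥ c n^{−1/(d−2) − 0.8}` and
`H_{A∪B}(x) ≥ c n^{−2.2}`. -/
theorem lex_harm (d : ℕ) (hd : 5 ≤ d) :
    ∃ c : ℝ, 0 < c ∧ ∀ n : ℕ, ∃ r : ℝ,
      ∀ A B : Finset (Pt d), Disjoint A B → (A ∪ B).card = n →
        r ≤ setDist d A B →
        ∀ x : Pt d, IsLex d A x →
          c * (n : ℝ) ^ (-(1 / ((d : ℝ) - 2)) - 0.8) ≤ esc d (↑(A ∪ B)) x ∧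
          c * (n : ℝ) ^ (-(2.2 : ℝ)) ≤ harm d (↑(A ∪ B)) x := by
  refine ⟨5 / (384 * d), by positivity, fun n => ?_⟩
  set K := 12 * ⌈(n : ℝ) ^ (0.8 : ℝ)⌉₊
  refine ⟨1 + √(288 * n * K), fun A B _ hcard hdist x hx => ?_⟩
  have hxW : x ∈ A ∪ B := Finset.mem_union_left B hx.1
  have hn : 1 ≤ n := hcard ▸ Finset.card_pos.2 ⟨x, hxW⟩
  have hn1 : (1 : ℝ) ≤ n := by exact_mod_cast hn
  obtain ⟨hKn, hKle⟩ : 144 * (n : ℝ) ≤ (K : ℝ) ^ 2 ∧ (K : ℝ) ≤ 24 * (n : ℝ) ^ (0.8 : ℝ) :=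
    twelve_mul_ceil_rpow_bounds hn
  have hesc := five_div_le_esc hd hx (K := K) (by rwa [hcard]) (by rwa [hcard])
  have hpow : 5 / (384 * d) * (n : ℝ) ^ (-0.8 : ℝ) ≤ esc d ↑(A ∪ B) x := by
    refine le_trans ?_ hesc
    rw [Real.rpow_neg (by positivity), ← div_eq_mul_inv, div_div,
      div_le_div_iff_of_pos_left (by norm_num) (by positivity) (by positivity)]
    nlinarith [mul_le_mul_of_nonneg_left hKle (by positivity : (0 : ℝ) ≤ 16 * d)]
  constructor
  · refine le_trans (mul_le_mul_of_nonneg_left ?_ (by positivity)) hpow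
    refine Real.rpow_le_rpow_of_exponent_le hn1 ?_
    have : 0 ≤ 1 / ((d : ℝ) - 2) := by
      have : (5 : ℝ) ≤ d := by exact_mod_cast hd
      exact div_nonneg zero_le_one (by linarith)
    linarith
  · have hharm := esc_div_card_le_harm (A ∪ B) hxW (lt_of_lt_of_le (by positivity) hpow)
    rw [hcard] at hharm
    refine le_trans ?_ ((div_le_div_of_nonneg_right hpow (by positivity)).trans hharm)
    rw [mul_div_assoc, ← Real.rpow_sub_one (by positivity)]
    gcongr
    norm_num

end HATFormal
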